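/- Let A, B be positive definite matrices in M_m(C) ⊗ M_n(C) with partial traces A_1 = Tr_2(A), B_1 = Tr_2(B). Let U : M_m(C) → M_m(C) ⊗ M_n(C) be the isometry U(X) = (X A_1^{-1/2} ⊗ I_2) A^{1/2} with adjoint U*(Y) = Tr_2(Y A^{1/2} (A_1^{-1/2} ⊗ I_2)). Then U* ∘ Δ(B/A) ∘ U = Δ(B_1/A_1), where Δ(B/A)(X) = B X A^{-1}. -/

import Mathlib

open Matrix Kronecker ComplexOrder

/-- Partial trace over the second tensor factor. -/
noncomputable def ptrace2 {m n : Type*} [Fintype n] (A : Matrix (m × n) (m × n) ℂ) :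
    Matrix m m ℂ := fun i j => ∑ k, A (i, k) (j, k)

/-- The positive semidefinite square root of a positive semidefinite matrix
(the definition Mathlib had as `Matrix.PosSemidef.sqrt`, since removed). -/
noncomputable def Matrix.PosSemidef.sqrt {n : Type*} [Fintype n] [DecidableEq n] {𝕜 : Type*}
    [RCLike 𝕜] {A : Matrix n n 𝕜} (hA : A.PosSemidef) : Matrix n n 𝕜 :=
  hA.1.eigenvectorUnitary.1 * diagonal ((↑) ∘ (√·) ∘ hA.1.eigenvalues) *
    (star hA.1.eigenvectorUnitary : Matrix n n 𝕜)

/-- The isometry `U : X ↦ (X A₁^{-1/2} ⊗ I₂) A^{1/2}`, where `A₁ = Tr₂ A`. -/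
noncomputable def mapU {m n : ℕ} (A : Matrix (Fin m × Fin n) (Fin m × Fin n) ℂ)
    (hA : A.PosDef) (hA1 : (ptrace2 A).PosDef) (X : Matrix (Fin m) (Fin m) ℂ) :
    Matrix (Fin m × Fin n) (Fin m × Fin n) ℂ :=
  ((X * (hA1.posSemidef.sqrt)⁻¹) ⊗ₖ (1 : Matrix (Fin n) (Fin n) ℂ)) * hA.posSemidef.sqrt

/-- The adjoint `U* : Y ↦ Tr₂(Y A^{1/2} (A₁^{-1/2} ⊗ I₂))` of the isometry `U`. -/
noncomputable def mapUadj {m n : ℕ} (A : Matrix (Fin m × Fin n) (Fin m × Fin n) ℂ)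
    (hA : A.PosDef) (hA1 : (ptrace2 A).PosDef)
    (Y : Matrix (Fin m × Fin n) (Fin m × Fin n) ℂ) : Matrix (Fin m) (Fin m) ℂ :=
  ptrace2 (Y * hA.posSemidef.sqrt * (((hA1.posSemidef.sqrt)⁻¹) ⊗ₖ (1 : Matrix (Fin n) (Fin n) ℂ)))

/-!
Since `U X * A⁻¹ = (X A₁^{-1/2} ⊗ I) A^{1/2} A⁻¹` and the adjoint multiplies on the right by
`A^{1/2} (A₁^{-1/2} ⊗ I)`, the middle collapses through `A^{1/2} A⁻¹ A^{1/2} = 1`, leaving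
`B ((X A₁⁻¹) ⊗ I)`. A right factor of the form `C ⊗ I` passes through `Tr₂`, giving `B₁ X A₁⁻¹`.
-/

namespace Matrix

variable {n 𝕜 : Type*} [Fintype n] [DecidableEq n] [RCLike 𝕜] {M : Matrix n n 𝕜}

theorem PosSemidef.sqrt_mul_self (hM : M.PosSemidef) : hM.sqrt * hM.sqrt = M := by
  have hsq : ∀ i, ((√(hM.1.eigenvalues i) : ℝ) : 𝕜) * (√(hM.1.eigenvalues i) : ℝ) =
      hM.1.eigenvalues i := fun i => by
    rw [← RCLike.ofReal_mul, Real.mul_self_sqrt (hM.eigenvalues_nonneg i)]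
  rw [PosSemidef.sqrt, ← Unitary.conjStarAlgAut_apply (S := 𝕜), ← map_mul, diagonal_mul_diagonal]
  conv_rhs => rw [hM.1.spectral_theorem]
  simp only [Function.comp_def, hsq]

theorem PosSemidef.inv_sqrt_mul_inv_sqrt (hM : M.PosSemidef) : hM.sqrt⁻¹ * hM.sqrt⁻¹ = M⁻¹ := by
  conv_rhs => rw [← hM.sqrt_mul_self, mul_inv_rev]

theorem PosDef.isUnit_sqrt (hM : M.PosDef) : IsUnit hM.posSemidef.sqrt :=
  isUnit_of_mul_isUnit_left (hM.posSemidef.sqrt_mul_self ▸ hM.isUnit)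

theorem PosDef.sqrt_mul_inv_mul_sqrt (hM : M.PosDef) :
    hM.posSemidef.sqrt * M⁻¹ * hM.posSemidef.sqrt = 1 := by
  have hs := (isUnit_iff_isUnit_det _).mp hM.isUnit_sqrt
  rw [← hM.posSemidef.inv_sqrt_mul_inv_sqrt, ← Matrix.mul_assoc, mul_nonsing_inv _ hs,
    Matrix.one_mul, nonsing_inv_mul _ hs]

end Matrix

theorem ptrace2_mul_kronecker_one {m n : Type*} [Fintype m] [Fintype n] [DecidableEq n]
    (Y : Matrix (m × n) (m × n) ℂ) (C : Matrix m m ℂ) :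
    ptrace2 (Y * (C ⊗ₖ (1 : Matrix n n ℂ))) = ptrace2 Y * C := by
  ext i j
  simp only [ptrace2, mul_apply, kroneckerMap_apply, Fintype.sum_prod_type, one_apply, mul_ite,
    mul_one, mul_zero, Finset.sum_ite_eq', Finset.mem_univ, if_true, Finset.sum_mul]
  exact Finset.sum_comm

theorem mapU_relative_modular_general {m n : ℕ}
    (A B : Matrix (Fin m × Fin n) (Fin m × Fin n) ℂ)
    (hA : A.PosDef) (hA1 : (ptrace2 A).PosDef) :
    ∀ X : Matrix (Fin m) (Fin m) ℂ,
      mapUadj A hA hA1 (B * mapU A hA hA1 X * A⁻¹) = ptrace2 B * X * (ptrace2 A)⁻¹ := by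
  intro X
  set s := hA.posSemidef.sqrt
  set s₁ := hA1.posSemidef.sqrt
  calc ptrace2 (B * (((X * s₁⁻¹) ⊗ₖ 1) * s) * A⁻¹ * s * (s₁⁻¹ ⊗ₖ 1))
      = ptrace2 (B * (((X * s₁⁻¹) ⊗ₖ 1) * (s * A⁻¹ * s) * (s₁⁻¹ ⊗ₖ 1))) := by
        simp only [Matrix.mul_assoc]
    _ = ptrace2 (B * ((X * (s₁⁻¹ * s₁⁻¹)) ⊗ₖ (1 : Matrix (Fin n) (Fin n) ℂ))) := by
        rw [hA.sqrt_mul_inv_mul_sqrt, Matrix.mul_one, ← mul_kronecker_mul, Matrix.mul_one,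
          Matrix.mul_assoc]
    _ = ptrace2 B * X * (ptrace2 A)⁻¹ := by
        rw [hA1.posSemidef.inv_sqrt_mul_inv_sqrt, ptrace2_mul_kronecker_one, Matrix.mul_assoc]

/-- The relation `U* ∘ Δ(B/A) ∘ U = Δ(B₁/A₁)`, where `Δ(B/A)(X) = B X A⁻¹`, `A₁ = Tr₂ A`,
`B₁ = Tr₂ B`. -/
theorem mapU_relative_modular {m n : ℕ}
    (A B : Matrix (Fin m × Fin n) (Fin m × Fin n) ℂ)
    (hA : A.PosDef) (hB : B.PosDef) (hA1 : (ptrace2 A).PosDef) :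
    ∀ X : Matrix (Fin m) (Fin m) ℂ,
      mapUadj A hA hA1 (B * mapU A hA hA1 X * A⁻¹) = ptrace2 B * X * (ptrace2 A)⁻¹ :=
  mapU_relative_modular_general A B hA hA1
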